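/- Let h₊ : ℝ → Matrix (Fin n) (Fin n) ℂ be a differentiable, 2π-periodic family of invertible matrices, let T be an invertible n×n complex matrix, and define the time-reversal partner h₋(k) = T · conj(h₊(−k)) · T⁻¹, where conj denotes the entrywise complex conjugate of a matrix. Then ∫₀^{2π} Tr[h₋(k)⁻¹ · (deriv h₋ k)] dk = −conj(∫₀^{2π} Tr[h₊(k)⁻¹ · (deriv h₊ k)] dk); hence the 1D winding numbers satisfy w₁[h₋] = conj(w₁[h₊]) (so that, winding numbers being real integers, w₁[h₊] = w₁[h₋], the situation of 1D class AI with anticommuting sublattice symmetry, AI + S₋). -/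

import Mathlib

open Matrix MeasureTheory intervalIntegral

/-- Entrywise derivative of a one-parameter family of matrices. -/
noncomputable def matDeriv {m : Type*} (h : ℝ → Matrix m m ℂ) (k : ℝ) : Matrix m m ℂ :=
  Matrix.of fun i j => deriv (fun t => h t i j) k

/-- The 1D winding number `w₁[h] = (1/(2πi)) ∫₀^{2π} Tr[h(k)⁻¹ · h'(k)] dk` of a family of
invertible matrices, with `h'` the entrywise derivative. -/
noncomputable def w1 {m : Type*} [Fintype m] [DecidableEq m] (h : ℝ → Matrix m m ℂ) : ℂ :=
  (1 / (2 * Real.pi * Complex.I)) *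
    ∫ k in (0 : ℝ)..(2 * Real.pi), ((h k)⁻¹ * matDeriv h k).trace


/-! The integrand of `h₋` at `k` is minus the complex conjugate of the integrand of `h₊` at `-k`:
similarity by `T` leaves `Tr[h⁻¹ h']` unchanged, entrywise conjugation commutes with inversion,
differentiation and trace, and the reflection `k ↦ -k` contributes the sign via the chain rule.
The reflected integral runs over `[-2π, 0]`, which periodicity moves back to `[0, 2π]`; finally
`conj (1 / (2πi)) = -1 / (2πi)` absorbs the sign in the winding numbers. -/

open ComplexConjugate

namespace Matrix

variable {m α : Type*} [Fintype m] [DecidableEq m]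

theorem nonsing_inv_map_starRingEnd [CommRing α] [StarRing α] (A : Matrix m m α) :
    (A.map (starRingEnd α))⁻¹ = A⁻¹.map (starRingEnd α) := by
  have hA : A.map (starRingEnd α) = Aᴴᵀ := by ext; rfl
  rw [hA, ← transpose_nonsing_inv, ← conjTranspose_nonsing_inv]
  ext; rfl

theorem trace_inv_mul_of_similar [CommRing α] {T : Matrix m m α} (hT : IsUnit T)
    (A B : Matrix m m α) : ((T * A * T⁻¹)⁻¹ * (T * B * T⁻¹)).trace = (A⁻¹ * B).trace := by
  have hTdet : IsUnit T.det := (isUnit_iff_isUnit_det T).mp hT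
  rw [mul_inv_rev, mul_inv_rev, nonsing_inv_nonsing_inv T hTdet]
  calc (T * (A⁻¹ * T⁻¹) * (T * B * T⁻¹)).trace
      = (T * (A⁻¹ * (T⁻¹ * T) * B) * T⁻¹).trace := by simp only [Matrix.mul_assoc]
    _ = (A⁻¹ * B).trace := by
      rw [nonsing_inv_mul T hTdet, Matrix.mul_one, trace_mul_cycle, nonsing_inv_mul T hTdet,
        Matrix.one_mul]

end Matrix

section matDeriv

variable {m : Type*}

theorem matDeriv_comp_neg (h : ℝ → Matrix m m ℂ) (k : ℝ) :
    matDeriv (fun t => h (-t)) k = -matDeriv h (-k) := by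
  ext i j
  exact deriv_comp_neg (f := fun t => h t i j) (x := k)

theorem matDeriv_map_conj (h : ℝ → Matrix m m ℂ) (k : ℝ) :
    matDeriv (fun t => (h t).map conj) k = (matDeriv h k).map conj := by
  ext i j
  exact deriv.star (𝕜 := ℝ) (F := ℂ) (f := fun t => h t i j)

theorem matDeriv_const_mul_mul_const [Fintype m] (A B : Matrix m m ℂ) {h : ℝ → Matrix m m ℂ}
    {k : ℝ} (hd : ∀ i j, DifferentiableAt ℝ (fun t => h t i j) k) :
    matDeriv (fun t => A * h t * B) k = A * matDeriv h k * B := by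
  ext i j
  have hentry : HasDerivAt (fun t => ∑ b, (∑ a, A i a * h t a b) * B b j)
      (∑ b, (∑ a, A i a * matDeriv h k a b) * B b j) k :=
    HasDerivAt.fun_sum fun b _ =>
      (HasDerivAt.fun_sum fun a _ => ((hd a b).hasDerivAt.const_mul (A i a))).mul_const _
  simpa only [matDeriv, of_apply, mul_apply] using hentry.deriv

theorem Function.Periodic.matDeriv {h : ℝ → Matrix m m ℂ} {c : ℝ}
    (hh : Function.Periodic h c) :
    Function.Periodic (matDeriv h) c := by
  intro k
  ext i j
  show deriv (fun t => h t i j) (k + c) = deriv (fun t => h t i j) k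
  simp only [← deriv_comp_add_const, show ∀ x, h (x + c) = h x from hh]

end matDeriv

theorem Function.Periodic.intervalIntegral_comp_neg {E : Type*} [NormedAddCommGroup E]
    [NormedSpace ℝ E] {f : ℝ → E} {c : ℝ} (hf : Function.Periodic f c) :
    ∫ x in (0 : ℝ)..c, f (-x) = ∫ x in (0 : ℝ)..c, f x := by
  simpa [intervalIntegral.integral_comp_neg] using hf.intervalIntegral_add_eq (-c) 0

theorem conj_one_div_two_pi_I :
    conj (1 / (2 * Real.pi * Complex.I)) = -(1 / (2 * Real.pi * Complex.I)) := by
  simp [map_ofNat]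

theorem trace_inv_mul_matDeriv_of_timeReversal {m : Type*} [Fintype m] [DecidableEq m]
    {h hm : ℝ → Matrix m m ℂ} {T : Matrix m m ℂ} (hT : IsUnit T)
    (hrel : ∀ k, hm k = T * (h (-k)).map conj * T⁻¹) {k : ℝ}
    (hd : ∀ i j, DifferentiableAt ℝ (fun t => h t i j) (-k)) :
    ((hm k)⁻¹ * matDeriv hm k).trace = -conj (((h (-k))⁻¹ * matDeriv h (-k)).trace) := by
  obtain rfl : hm = fun t => T * (h (-t)).map conj * T⁻¹ := funext hrel
  have hd' : ∀ i j, DifferentiableAt ℝ (fun t => (h (-t)).map conj i j) k := fun i j =>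
    (differentiableAt_comp_neg.mpr (hd i j)).star
  rw [matDeriv_const_mul_mul_const _ _ hd', matDeriv_map_conj (fun t => h (-t)),
    matDeriv_comp_neg, trace_inv_mul_of_similar hT, nonsing_inv_map_starRingEnd,
    Matrix.map_neg _ (map_neg _), Matrix.mul_neg, trace_neg, ← Matrix.map_mul,
    AddMonoidHom.map_trace]

theorem winding_number_time_reversal_partner_general
    {n : ℕ} (hp : ℝ → Matrix (Fin n) (Fin n) ℂ)
    (hdiff : ∀ i j, Differentiable ℝ fun k => hp k i j)
    (hper : ∀ k : ℝ, hp (k + 2 * Real.pi) = hp k)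
    (T : Matrix (Fin n) (Fin n) ℂ) (hT : IsUnit T)
    (hm : ℝ → Matrix (Fin n) (Fin n) ℂ)
    (hrel : ∀ k : ℝ, hm k = T * (hp (-k)).map (starRingEnd ℂ) * T⁻¹) :
    (∫ k in (0 : ℝ)..(2 * Real.pi), ((hm k)⁻¹ * matDeriv hm k).trace) =
      -(starRingEnd ℂ) (∫ k in (0 : ℝ)..(2 * Real.pi), ((hp k)⁻¹ * matDeriv hp k).trace) ∧
    w1 hm = (starRingEnd ℂ) (w1 hp) := by
  have hperiodic : Function.Periodic (fun k => ((hp k)⁻¹ * matDeriv hp k).trace) (2 * Real.pi) :=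
    fun k => by simp only [hper k, Function.Periodic.matDeriv hper k]
  have hintegral : (∫ k in (0 : ℝ)..(2 * Real.pi), ((hm k)⁻¹ * matDeriv hm k).trace) =
      -conj (∫ k in (0 : ℝ)..(2 * Real.pi), ((hp k)⁻¹ * matDeriv hp k).trace) := by
    simp only [trace_inv_mul_matDeriv_of_timeReversal hT hrel fun i j => hdiff i j _,
      intervalIntegral.integral_neg, intervalIntegral_conj, hperiodic.intervalIntegral_comp_neg]
  refine ⟨hintegral, ?_⟩
  rw [w1, w1, hintegral, map_mul, conj_one_div_two_pi_I, mul_neg, neg_mul]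

/-- For a differentiable, 2π-periodic family of invertible matrices `h₊`, an
invertible matrix `T`, and the time-reversal partner `h₋(k) = T · conj(h₊(−k)) · T⁻¹` (with
`conj` the entrywise complex conjugate), the trace integrals satisfy
`∫₀^{2π} Tr[h₋⁻¹ h₋'] = −conj(∫₀^{2π} Tr[h₊⁻¹ h₊'])`; hence `w₁[h₋] = conj(w₁[h₊])`
(1D class AI with anticommuting sublattice symmetry, AI + S₋). -/
theorem winding_number_time_reversal_partner
    {n : ℕ} (hp : ℝ → Matrix (Fin n) (Fin n) ℂ)
    (hdiff : ∀ i j, Differentiable ℝ fun k => hp k i j)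
    (hper : ∀ k : ℝ, hp (k + 2 * Real.pi) = hp k)
    (hunit : ∀ k, IsUnit (hp k))
    (T : Matrix (Fin n) (Fin n) ℂ) (hT : IsUnit T)
    (hm : ℝ → Matrix (Fin n) (Fin n) ℂ)
    (hrel : ∀ k : ℝ, hm k = T * (hp (-k)).map (starRingEnd ℂ) * T⁻¹) :
    (∫ k in (0 : ℝ)..(2 * Real.pi), ((hm k)⁻¹ * matDeriv hm k).trace) =
      -(starRingEnd ℂ) (∫ k in (0 : ℝ)..(2 * Real.pi), ((hp k)⁻¹ * matDeriv hp k).trace) ∧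
    w1 hm = (starRingEnd ℂ) (w1 hp) :=
  winding_number_time_reversal_partner_general hp hdiff hper T hT hm hrel
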